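/- arXiv:math/0606412 — 4 statements merged into one kernel-verified Lean document; each statement's English description precedes it below -/
import Mathlib

section
/- Let A be a finite-dimensional ℂ-algebra with a nondegenerate symmetric associative trace form, Z its center, and μ a central invertible element. Then the trace form induces a nondegenerate pairing between Z ∩ μ⁻¹[A,A] and A/([A,A] + μZ). -/
/-- The trace form induces a nondegenerate pairing between `Z ∩ μ⁻¹[A,A]` and
`A/([A,A] + μZ)`: the pairing is well defined (vanishes on `[A,A] + μZ`), and is
nondegenerate on both sides. -/
theorem stmt3 {A : Type*} [Ring A] [Algebra ℂ A] [FiniteDimensional ℂ A]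
    (B : A →ₗ[ℂ] A →ₗ[ℂ] ℂ)
    (hsymm : ∀ x y : A, B x y = B y x)
    (hassoc : ∀ x y z : A, B (x * y) z = B x (y * z))
    (hnd : ∀ x : A, (∀ y : A, B x y = 0) → x = 0)
    (μ : A) (hμc : μ ∈ Set.center A) (hμu : IsUnit μ)
    (C : Submodule ℂ A) (hC : C = Submodule.span ℂ {c : A | ∃ y z : A, c = y * z - z * y})
    (Zc : Submodule ℂ A) (hZc : Zc = Subalgebra.toSubmodule (Subalgebra.center ℂ A))
    (T : Submodule ℂ A) (hT : T = C ⊔ Submodule.map (LinearMap.mulLeft ℂ μ) Zc) :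
    (∀ w : A, w ∈ Zc → μ * w ∈ C → ∀ t ∈ T, B w t = 0) ∧
    (∀ w : A, w ∈ Zc → μ * w ∈ C → (∀ a : A, B w a = 0) → w = 0) ∧
    (∀ a : A, (∀ w : A, w ∈ Zc → μ * w ∈ C → B w a = 0) → a ∈ T) := by
  -- B as a bilinear form
  have hrefl : B.IsRefl := fun x y h => by rw [hsymm]; exact h
  have hndB : LinearMap.BilinForm.Nondegenerate B := ⟨hnd, fun y h => hnd y (fun x => by rw [hsymm]; exact h x)⟩
  have hμcomm : ∀ x : A, μ * x = x * μ := fun x => hμc.comm x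
  -- key identity : B w (x*y - y*x) = B (w*x - x*w) y
  have key : ∀ w x y : A, B w (x * y - y * x) = B (w * x - x * w) y := by
    intro w x y
    have h1 : B w (x * y) = B (w * x) y := (hassoc w x y).symm
    have h2 : B w (y * x) = B (x * w) y := by
      rw [← hassoc w y x, hsymm (w * y) x, hassoc x w y, hsymm]
    simp only [map_sub, LinearMap.sub_apply, h1, h2]
  -- centrality criterion
  have mem_Zc_iff : ∀ w : A, w ∈ Zc ↔ ∀ x : A, w * x - x * w = 0 := by
    intro w
    rw [hZc]
    simp only [Subalgebra.mem_toSubmodule, Subalgebra.mem_center_iff]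
    constructor
    · intro hw x
      rw [hw x, sub_self]
    · intro h x
      have := h x; linear_combination (norm := noncomm_ring) -this
  -- Zc is the orthogonal of C
  have hZC : Zc = LinearMap.BilinForm.orthogonal B C := by
    apply le_antisymm
    · intro w hw
      intro n hn
      rw [hC] at hn
      induction hn using Submodule.span_induction with
      | mem c hc =>
        obtain ⟨x, y, rfl⟩ := hc
        have : B w (x * y - y * x) = 0 := by
          rw [key]
          have : w * x - x * w = 0 := (mem_Zc_iff w).mp hw x
          rw [this, map_zero, LinearMap.zero_apply]
        rw [hsymm, this]
      | zero => simp [LinearMap.BilinForm.IsOrtho]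
      | add a b _ _ ha hb =>
        rw [map_add, LinearMap.add_apply, ha, hb, add_zero]
      | smul c a _ ha =>
        rw [map_smul, LinearMap.smul_apply, ha, smul_zero]
    · intro w hw
      rw [mem_Zc_iff]
      intro x
      apply hnd
      intro y
      rw [← key]
      have hx : x * y - y * x ∈ C := by
        rw [hC]; exact Submodule.subset_span ⟨x, y, rfl⟩
      rw [hsymm]
      exact hw _ hx
  -- C is the orthogonal of Zc
  have hCZ : C = LinearMap.BilinForm.orthogonal B Zc := by
    rw [hZC, LinearMap.BilinForm.orthogonal_orthogonal hndB hrefl]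
  -- the orthogonal of T is Zc ⊓ μ⁻¹ C
  have hTperp : LinearMap.BilinForm.orthogonal B T
      = Zc ⊓ Submodule.comap (LinearMap.mulLeft ℂ μ) C := by
    ext w
    constructor
    · intro hw
      have hwC : ∀ n ∈ C, B n w = 0 := by
        intro n hn
        exact hw n (hT ▸ Submodule.mem_sup_left hn)
      have hwZ : w ∈ Zc := hZC ▸ (fun n hn => hwC n hn)
      refine ⟨hwZ, ?_⟩
      -- show μ * w ∈ C = orthogonal Zc
      show μ * w ∈ C
      rw [hCZ]
      intro z hz
      have h1 : B (μ * z) w = 0 :=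
        hw (μ * z) (hT ▸ Submodule.mem_sup_right ⟨z, hz, rfl⟩)
      have : B z (μ * w) = 0 := by
        rw [← hassoc z μ w, ← hμcomm z]; exact h1
      rw [this]
    · rintro ⟨hwZ, hwC⟩
      have hwC' : μ * w ∈ C := hwC
      clear hwC
      rename' hwC' => hwC
      intro n hn
      rw [hT] at hn
      -- n ∈ C ⊔ μ Zc
      obtain ⟨c, hc, mz, hmz, rfl⟩ := Submodule.mem_sup.mp hn
      obtain ⟨z, hz, rfl⟩ := hmz
      rw [map_add, LinearMap.add_apply]
      have h1 : B c w = 0 := (hZC ▸ hwZ) c hc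
      have h2 : B (LinearMap.mulLeft ℂ μ z) w = 0 := by
        rw [LinearMap.mulLeft_apply, hμcomm z, hassoc z μ w]
        exact (hCZ ▸ hwC) z hz
      rw [h1, h2, add_zero]
  refine ⟨?_, ?_, ?_⟩
  · intro w hwZ hwC t ht
    have hw : w ∈ LinearMap.BilinForm.orthogonal B T := by
      rw [hTperp]
      exact ⟨hwZ, show μ * w ∈ C from hwC⟩
    rw [hsymm]
    exact hw t ht
  · intro w _ _ h
    exact hnd w h
  · intro a ha
    have : a ∈ LinearMap.BilinForm.orthogonal B
        (LinearMap.BilinForm.orthogonal B T) := by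
      intro w hw
      rw [hTperp] at hw
      obtain ⟨hwZ, hwC⟩ := hw
      exact ha w hwZ hwC
    rwa [LinearMap.BilinForm.orthogonal_orthogonal hndB hrefl] at this
end

section
/- For the quiver of type A_{n−1}, with adjacency matrix C (the path graph on n−1 vertices), one has det(1 − Ct + t²·Id) = (1 − t^{2n})/(1 − t²) as rational functions in t. -/
open Polynomial

noncomputable def Mtri (m : ℕ) : Matrix (Fin m) (Fin m) ℚ[X] :=
  Matrix.of fun i j =>
    (1 + (X : ℚ[X]) ^ 2) * (if i = j then 1 else 0) -
      X * (if (i : ℕ) + 1 = (j : ℕ) ∨ (j : ℕ) + 1 = (i : ℕ) then 1 else 0)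

lemma Mtri_ext_entry {m k : ℕ} (f : Fin m → Fin k) (g : Fin m → Fin k)
    (hf : ∀ i j : Fin m, ((f i : ℕ) = (g j : ℕ)) ↔ ((i:ℕ) = (j:ℕ)))
    (hadj : ∀ i j : Fin m, ((f i : ℕ) + 1 = (g j : ℕ) ∨ (g j : ℕ) + 1 = (f i : ℕ)) ↔
      ((i:ℕ) + 1 = (j:ℕ) ∨ (j:ℕ) + 1 = (i:ℕ))) :
    (Mtri k).submatrix f g = Mtri m := by
  funext i j
  simp only [Mtri, Matrix.submatrix_apply, Matrix.of_apply]
  have hij : (f i = g j) ↔ (i = j) := by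
    rw [Fin.ext_iff, Fin.ext_iff (a := i)]; exact hf i j
  rw [if_congr hij rfl rfl, if_congr (hadj i j) rfl rfl]

lemma Mtri_rec (m : ℕ) :
    (Mtri (m + 2)).det = (1 + (X:ℚ[X])^2) * (Mtri (m+1)).det - X^2 * (Mtri m).det := by
  have hsA : ∀ j : Fin m, (1 : Fin (m+2)).succAbove j.succ = j.succ.succ := by
    intro j
    apply Fin.succAbove_of_le_castSucc
    simp [Fin.le_def]
  have hs0 : (1 : Fin (m+2)).succAbove 0 = 0 := by
    apply Fin.succAbove_of_castSucc_lt
    simp [Fin.lt_def]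
  rw [Matrix.det_succ_row_zero, Fin.sum_univ_succ, Fin.sum_univ_succ]
  have hz : ∀ j : Fin m,
      (-1 : ℚ[X]) ^ (((j.succ.succ : Fin (m+2))) : ℕ) * Mtri (m+2) 0 j.succ.succ *
        ((Mtri (m+2)).submatrix Fin.succ j.succ.succ.succAbove).det = 0 := by
    intro j
    have : Mtri (m+2) 0 j.succ.succ = 0 := by
      simp [Mtri, Fin.ext_iff]
    rw [this]; ring
  rw [Finset.sum_eq_zero (fun j _ => hz j)]
  have h0 : (Mtri (m+2)).submatrix Fin.succ ((0 : Fin (m+2)).succAbove) = Mtri (m+1) := by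
    rw [Fin.succAbove_zero]
    apply Mtri_ext_entry <;> intro i j <;> simp [Fin.val_succ] <;> omega
  have hone : (Fin.succ 0 : Fin (m+2)) = 1 := by ext; simp
  have h1col : ((Mtri (m+2)).submatrix Fin.succ ((1 : Fin (m+2)).succAbove)).det
      = -X * (Mtri m).det := by
    rw [Matrix.det_succ_column_zero, Fin.sum_univ_succ]
    have hz2 : ∀ i : Fin m,
        (-1:ℚ[X]) ^ ((i.succ : Fin (m+1)) : ℕ) *
          (Mtri (m+2)).submatrix Fin.succ ((1 : Fin (m+2)).succAbove) i.succ 0 *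
          (((Mtri (m+2)).submatrix Fin.succ ((1 : Fin (m+2)).succAbove)).submatrix
            i.succ.succAbove Fin.succ).det = 0 := by
      intro i
      have : (Mtri (m+2)).submatrix Fin.succ ((1 : Fin (m+2)).succAbove) i.succ 0 = 0 := by
        rw [Matrix.submatrix_apply, hs0]
        simp [Mtri, Fin.ext_iff]
      rw [this]; ring
    rw [Finset.sum_eq_zero (fun i _ => hz2 i)]
    have e1 : (Mtri (m+2)).submatrix Fin.succ ((1 : Fin (m+2)).succAbove) 0 0 = -X := by
      rw [Matrix.submatrix_apply, hs0]
      simp [Mtri, Fin.ext_iff]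
    have e2 : ((Mtri (m+2)).submatrix Fin.succ ((1 : Fin (m+2)).succAbove)).submatrix
        ((0 : Fin (m+1)).succAbove) Fin.succ = Mtri m := by
      rw [Fin.succAbove_zero, Matrix.submatrix_submatrix]
      have hcomp : ((1 : Fin (m+2)).succAbove ∘ Fin.succ : Fin m → Fin (m+2)) =
          fun j => j.succ.succ := by
        funext j; exact hsA j
      rw [hcomp]
      apply Mtri_ext_entry <;> intro i j <;> simp [Fin.val_succ] <;> omega
    rw [e1, e2]
    simp
  have e00 : Mtri (m+2) 0 0 = 1 + X^2 := by simp [Mtri]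
  have e01 : Mtri (m+2) 0 1 = -X := by
    simp [Mtri, Fin.ext_iff]
  rw [hone, h0, h1col, e00, e01]
  simp
  ring

lemma Mtri_key (m : ℕ) :
    (Mtri m).det * (1 - (X:ℚ[X])^2) = 1 - (X:ℚ[X])^(2*m+2) := by
  induction m using Nat.strong_induction_on with
  | _ m ih =>
    match m with
    | 0 =>
      have : (Mtri 0).det = 1 := Matrix.det_fin_zero
      rw [this]; ring
    | 1 =>
      have : (Mtri 1).det = 1 + X^2 := by
        rw [Matrix.det_fin_one]
        simp [Mtri]
      rw [this]; ring
    | (m+2) =>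
      rw [Mtri_rec]
      have h1 := ih (m+1) (by omega)
      have h2 := ih m (by omega)
      linear_combination (1 + (X:ℚ[X])^2) * h1 - (X:ℚ[X])^2 * h2

/-- For the type `A_{n-1}` quiver with adjacency matrix `C` (path graph on `n-1` vertices),
`det(1 - Ct + t²·Id) = (1 - t^{2n})/(1 - t²)`, stated with denominators cleared over `ℚ[t]`
(equivalent to the identity in `ℚ(t)` since `1 - t² ≠ 0`). -/
theorem stmt10 (n : ℕ) (hn : 2 ≤ n) :
    (Matrix.of fun i j : Fin (n - 1) =>
        (1 + (X : ℚ[X]) ^ 2) * (if i = j then 1 else 0) -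
          X * (if (i : ℕ) + 1 = (j : ℕ) ∨ (j : ℕ) + 1 = (i : ℕ) then 1 else 0)).det *
      (1 - (X : ℚ[X]) ^ 2) = 1 - (X : ℚ[X]) ^ (2 * n) := by
  have h := Mtri_key (n - 1)
  rw [show 2 * (n-1) + 2 = 2 * n by omega] at h
  exact h
end

section
/- For the Dynkin quiver of type D_{n+1} with adjacency matrix C, one has det(1 − Ct + t²·Id) = (1 − t⁴)(1 − t^{4n}) / ((1 − t²)(1 − t^{2n})). -/
open Polynomial

lemma finSumTwo {M : Type*} [AddCommMonoid M] {k : ℕ} (f : Fin k → M) (a b : Fin k)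
    (hab : a ≠ b) (h : ∀ c, c ≠ a → c ≠ b → f c = 0) : ∑ c, f c = f a + f b := by
  have : ∑ c, f c = ∑ c ∈ ({a, b} : Finset (Fin k)), f c := by
    refine (Finset.sum_subset (Finset.subset_univ _) ?_).symm
    intro x _ hx
    simp only [Finset.mem_insert, Finset.mem_singleton, not_or] at hx
    exact h x hx.1 hx.2
  rw [this, Finset.sum_pair hab]

/-- The matrix `(1+X²)·Id - X·A` for the path graph on `m` vertices. -/
noncomputable def pM (m : ℕ) : Matrix (Fin m) (Fin m) ℚ[X] :=
  Matrix.of fun i j => if (i : ℕ) = j then 1 + X ^ 2 else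
    if (i : ℕ) + 1 = j ∨ (j : ℕ) + 1 = i then -X else 0

lemma pM_zero {m : ℕ} {i j : Fin m} (hd : (i : ℕ) ≠ j) (ha : (i : ℕ) + 1 ≠ j)
    (hb : (j : ℕ) + 1 ≠ i) : pM m i j = 0 := by
  simp only [pM, Matrix.of_apply]
  split_ifs <;> first | rfl | omega

lemma pM_diag {m : ℕ} {i j : Fin m} (hd : (i : ℕ) = j) : pM m i j = 1 + X ^ 2 := by
  simp only [pM, Matrix.of_apply, if_pos hd]

lemma pM_adj {m : ℕ} {i j : Fin m} (h : (i : ℕ) + 1 = j ∨ (j : ℕ) + 1 = i) :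
    pM m i j = -X := by
  simp only [pM, Matrix.of_apply, if_pos h]
  rw [if_neg (by omega)]

lemma pM_shift (m : ℕ) : (pM (m + 1)).submatrix Fin.succ Fin.succ = pM m := by
  ext i j
  simp only [pM, Matrix.submatrix_apply, Matrix.of_apply, Fin.val_succ]
  split_ifs <;> first | rfl | omega

lemma pM_shift2 (m : ℕ) :
    ((pM (m + 2)).submatrix (Fin.succAbove 1) Fin.succ).submatrix Fin.succ (Fin.succAbove 0)
      = pM m := by
  ext i j
  simp only [Matrix.submatrix_apply, Fin.succAbove_zero]
  rw [show ((1 : Fin (m+2)).succAbove i.succ) = i.succ.succ from by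
    rw [show (1 : Fin (m+2)) = (0 : Fin (m+1)).succ from rfl, Fin.succ_succAbove_succ,
      Fin.succAbove_zero]]
  simp only [pM, Matrix.of_apply, Fin.val_succ]
  split_ifs <;> first | rfl | omega

lemma pM_det : ∀ m, (pM m).det = ∑ k ∈ Finset.range (m + 1), (X : ℚ[X]) ^ (2 * k)
  | 0 => by simp [Matrix.det_fin_zero]
  | 1 => by simp [pM, Matrix.det_fin_one, Finset.sum_range_succ]
  | (m + 2) => by
      have h1 := pM_det (m + 1)
      have h0 := pM_det m
      rw [Matrix.det_succ_column_zero]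
      rw [finSumTwo _ 0 1 (by simp)]
      · -- evaluate the two surviving terms
        have e0 : pM (m + 2) 0 0 = 1 + X ^ 2 := pM_diag rfl
        have e1 : pM (m + 2) 1 0 = -X := pM_adj (by simp [Fin.val_one])
        rw [e0, e1, Fin.succAbove_zero, pM_shift, h1]
        -- second minor
        have key : ((pM (m + 2)).submatrix (Fin.succAbove 1) Fin.succ).det
            = -X * (pM m).det := by
          rw [Matrix.det_succ_row_zero]
          rw [Finset.sum_eq_single 0]
          · have h10 : (1 : Fin (m+2)).succAbove 0 = 0 := Fin.one_succAbove_zero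
            have ee : (pM (m + 2)).submatrix (Fin.succAbove 1) Fin.succ 0 0 = -X := by
              rw [Matrix.submatrix_apply, h10]
              exact pM_adj (by simp)
            rw [ee, pM_shift2]
            simp
          · intro c _ hc
            have hc' : (c : ℕ) ≠ 0 := by
              intro h; exact hc (Fin.ext (by rw [h]; rfl))
            have hz : (pM (m + 2)).submatrix (Fin.succAbove 1) Fin.succ 0 c = 0 := by
              rw [Matrix.submatrix_apply, Fin.one_succAbove_zero]
              exact pM_zero (by simp +decide <;> omega) (by simp <;> omega) (by simp <;> omega)
            rw [hz]
            ring
          · simp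
        rw [key, h0]
        -- algebra
        rw [show ((0 : Fin (m + 2)) : ℕ) = 0 from rfl,
          show ((1 : Fin (m + 2)) : ℕ) = 1 from Fin.val_one _]
        rw [show m + 1 + 1 = m + 2 from rfl, show m + 2 + 1 = m + 3 from rfl,
          show (Finset.range (m+3)).sum (fun k => (X:ℚ[X]) ^ (2*k))
              = (∑ k ∈ Finset.range (m+1), (X:ℚ[X]) ^ (2*k)) + X ^ (2*(m+1)) + X ^ (2*(m+2))
            from by rw [Finset.sum_range_succ, Finset.sum_range_succ],
          Finset.sum_range_succ]
        ring
      · intro c hc0 hc1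
        have hc0' : (c : ℕ) ≠ 0 := fun h => hc0 (Fin.ext (by rw [h]; rfl))
        have hc1' : (c : ℕ) ≠ 1 := fun h => hc1 (Fin.ext (by rw [h, Fin.val_one]))
        have hz : pM (m + 2) c 0 = 0 :=
          pM_zero (by simp +decide <;> omega) (by simp <;> omega) (by simp <;> omega)
        rw [hz]
        ring

lemma succAbove_val {k : ℕ} (p : Fin (k + 1)) (i : Fin k) :
    ((p.succAbove i : Fin (k + 1)) : ℕ) = if (i : ℕ) < (p : ℕ) then (i : ℕ) else (i : ℕ) + 1 := by
  by_cases h : (i : ℕ) < (p : ℕ)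
  · rw [Fin.succAbove_of_castSucc_lt p i (by rwa [Fin.lt_def, Fin.coe_castSucc]),
      Fin.coe_castSucc, if_pos h]
  · rw [Fin.succAbove_of_le_castSucc p i (by rw [Fin.le_def, Fin.coe_castSucc]; omega),
      Fin.val_succ, if_neg h]

/-- The matrix `(1+X²)·Id - X·A` for the Dynkin diagram `D_{m+4}`. -/
noncomputable def dM (m : ℕ) : Matrix (Fin (m + 4)) (Fin (m + 4)) ℚ[X] :=
  Matrix.of fun i j => if (i : ℕ) = j then 1 + X ^ 2 else
    if ((i : ℕ) + 1 = j ∧ (j : ℕ) ≤ m + 2) ∨ ((j : ℕ) + 1 = i ∧ (i : ℕ) ≤ m + 2)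
      ∨ ((i : ℕ) = m + 1 ∧ (j : ℕ) = m + 3) ∨ ((j : ℕ) = m + 1 ∧ (i : ℕ) = m + 3)
      then -X else 0

lemma dM_diag {m : ℕ} {i j : Fin (m + 4)} (hd : (i : ℕ) = j) : dM m i j = 1 + X ^ 2 := by
  simp only [dM, Matrix.of_apply, if_pos hd]

lemma dM_adj {m : ℕ} {i j : Fin (m + 4)}
    (hc : ((i : ℕ) + 1 = j ∧ (j : ℕ) ≤ m + 2) ∨ ((j : ℕ) + 1 = i ∧ (i : ℕ) ≤ m + 2)
      ∨ ((i : ℕ) = m + 1 ∧ (j : ℕ) = m + 3) ∨ ((j : ℕ) = m + 1 ∧ (i : ℕ) = m + 3)) :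
    dM m i j = -X := by
  simp only [dM, Matrix.of_apply]
  rw [if_neg (by omega), if_pos hc]

lemma dM_zero {m : ℕ} {i j : Fin (m + 4)} (hd : (i : ℕ) ≠ j)
    (hc : ¬(((i : ℕ) + 1 = j ∧ (j : ℕ) ≤ m + 2) ∨ ((j : ℕ) + 1 = i ∧ (i : ℕ) ≤ m + 2)
      ∨ ((i : ℕ) = m + 1 ∧ (j : ℕ) = m + 3) ∨ ((j : ℕ) = m + 1 ∧ (i : ℕ) = m + 3))) :
    dM m i j = 0 := by
  simp only [dM, Matrix.of_apply, if_neg hd, if_neg hc]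

lemma dM_minor1 (m : ℕ) :
    (dM m).submatrix Fin.castSucc Fin.castSucc = pM (m + 3) := by
  ext i j
  have hi := i.isLt; have hj := j.isLt
  simp only [dM, pM, Matrix.submatrix_apply, Matrix.of_apply, Fin.coe_castSucc]
  split_ifs <;> first | rfl | omega

lemma dM_minor4 (m : ℕ) :
    ((((dM m).submatrix Fin.castSucc ((⟨m+1, by omega⟩ : Fin (m+4)).succAbove)).submatrix
        ((⟨m+1, by omega⟩ : Fin (m+3)).succAbove) ((Fin.last (m+2)).succAbove)).submatrix
        ((Fin.last (m+1)).succAbove) ((Fin.last (m+1)).succAbove)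
      = pM (m + 1)) := by
  ext i j
  have hi := i.isLt; have hj := j.isLt
  simp only [Matrix.submatrix_apply, dM, pM, Matrix.of_apply, succAbove_val,
    Fin.coe_castSucc, Fin.val_last, Fin.val_mk]
  split_ifs <;> first | rfl | omega

lemma geom : ∀ j : ℕ, (∑ k ∈ Finset.range (j + 2), (X : ℚ[X]) ^ (2 * k))
    = X ^ 2 * (∑ k ∈ Finset.range j, X ^ (2 * k)) + 1 + X ^ (2 * (j + 1))
  | 0 => by simp [Finset.sum_range_succ]
  | (j + 1) => by
      rw [Finset.sum_range_succ, geom j, Finset.sum_range_succ]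
      ring

lemma det_minor3 (m : ℕ) :
    ((((dM m).submatrix Fin.castSucc ((⟨m+1, by omega⟩ : Fin (m+4)).succAbove)).submatrix
        ((⟨m+1, by omega⟩ : Fin (m+3)).succAbove) ((Fin.last (m+2)).succAbove)).det
      = (1 + X ^ 2) * (pM (m + 1)).det) := by
  rw [Matrix.det_succ_row _ (Fin.last (m+1)), Finset.sum_eq_single (Fin.last (m+1))]
  · rw [dM_minor4]
    have he : (((dM m).submatrix Fin.castSucc
          ((⟨m+1, by omega⟩ : Fin (m+4)).succAbove)).submatrix
          ((⟨m+1, by omega⟩ : Fin (m+3)).succAbove) ((Fin.last (m+2)).succAbove))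
          (Fin.last (m+1)) (Fin.last (m+1)) = 1 + X ^ 2 := by
      rw [Matrix.submatrix_apply, Matrix.submatrix_apply]
      refine dM_diag ?_
      simp only [succAbove_val, Fin.coe_castSucc, Fin.val_last, Fin.val_mk]
      split_ifs <;> omega
    rw [he, Even.neg_one_pow ⟨((Fin.last (m+1)) : ℕ), rfl⟩]
    ring
  · intro b _ hb
    have hb' : (b : ℕ) ≠ m + 1 := fun h => hb (Fin.ext h)
    have hbl := b.isLt
    have hz : (((dM m).submatrix Fin.castSucc
          ((⟨m+1, by omega⟩ : Fin (m+4)).succAbove)).submatrix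
          ((⟨m+1, by omega⟩ : Fin (m+3)).succAbove) ((Fin.last (m+2)).succAbove))
          (Fin.last (m+1)) b = 0 := by
      rw [Matrix.submatrix_apply, Matrix.submatrix_apply]
      refine dM_zero ?_ ?_ <;>
        · simp only [succAbove_val, Fin.coe_castSucc, Fin.val_last, Fin.val_mk]
          split_ifs <;> omega
    rw [hz]
    ring
  · simp

lemma det_minor2 (m : ℕ) :
    (((dM m).submatrix Fin.castSucc ((⟨m+1, by omega⟩ : Fin (m+4)).succAbove)).det
      = X * ((1 + X ^ 2) * (pM (m + 1)).det)) := by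
  rw [Matrix.det_succ_column _ (Fin.last (m+2)),
    Finset.sum_eq_single (⟨m+1, by omega⟩ : Fin (m+3))]
  · rw [det_minor3]
    have he : ((dM m).submatrix Fin.castSucc ((⟨m+1, by omega⟩ : Fin (m+4)).succAbove))
        (⟨m+1, by omega⟩ : Fin (m+3)) (Fin.last (m+2)) = -X := by
      rw [Matrix.submatrix_apply]
      refine dM_adj ?_
      simp only [succAbove_val, Fin.coe_castSucc, Fin.val_last, Fin.val_mk]
      split_ifs <;> first | omega | simp
    rw [he, Odd.neg_one_pow ⟨m+1, by simp only [Fin.val_last, Fin.val_mk]; try ring⟩]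
    ring
  · intro b _ hb
    have hb' : (b : ℕ) ≠ m + 1 := fun h => hb (Fin.ext h)
    have hbl := b.isLt
    have hz : ((dM m).submatrix Fin.castSucc ((⟨m+1, by omega⟩ : Fin (m+4)).succAbove))
        b (Fin.last (m+2)) = 0 := by
      rw [Matrix.submatrix_apply]
      refine dM_zero ?_ ?_ <;>
        · simp only [succAbove_val, Fin.coe_castSucc, Fin.val_last, Fin.val_mk]
          split_ifs <;> omega
    rw [hz]
    ring
  · simp

lemma dM_det (m : ℕ) : (dM m).det = (1 + X ^ 2) * (1 + X ^ (2 * (m + 3))) := by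
  rw [Matrix.det_succ_row _ (Fin.last (m+3))]
  rw [finSumTwo _ (Fin.last (m+3)) (⟨m+1, by omega⟩ : Fin (m+4))
      (fun h => by simpa [Fin.ext_iff, Fin.val_last] using h)]
  · have e1 : dM m (Fin.last (m+3)) (Fin.last (m+3)) = 1 + X ^ 2 := dM_diag rfl
    have e2 : dM m (Fin.last (m+3)) (⟨m+1, by omega⟩ : Fin (m+4)) = -X := by
      refine dM_adj ?_
      simp only [Fin.val_last, Fin.val_mk]
      first | omega | simp
    rw [e1, e2, Even.neg_one_pow ⟨((Fin.last (m+3)) : ℕ), rfl⟩,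
      Even.neg_one_pow (⟨m+2, by simp only [Fin.val_last, Fin.val_mk]; try ring⟩ :
        Even (((Fin.last (m+3)) : ℕ) + ((⟨m+1, by omega⟩ : Fin (m+4)) : ℕ))),
      Fin.succAbove_last, dM_minor1, det_minor2, pM_det, pM_det]
    rw [show m + 3 + 1 = m + 2 + 2 from rfl, geom (m+2)]
    ring
  · intro c hcl hcm
    have hc1 : (c : ℕ) ≠ m + 3 := fun h => hcl (Fin.ext (by rw [h]; rfl))
    have hc2 : (c : ℕ) ≠ m + 1 := fun h => hcm (Fin.ext h)
    have hcb := c.isLt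
    have hz : dM m (Fin.last (m+3)) c = 0 := by
      refine dM_zero ?_ ?_ <;> simp only [Fin.val_last] <;> omega
    rw [hz]
    ring


/-- For the Dynkin quiver of type `D_{n+1}` with adjacency matrix `C` (vertices `0,…,n`:
a path `0 — 1 — ⋯ — (n-1)` with the extra vertex `n` attached to vertex `n-2`),
`det(1 - Ct + t²·Id) = (1-t⁴)(1-t^{4n})/((1-t²)(1-t^{2n}))`, stated with denominators
cleared over `ℚ[t]` (equivalent to the identity in `ℚ(t)`). -/
theorem stmt11 (n : ℕ) (hn : 3 ≤ n) :
    (Matrix.of fun i j : Fin (n + 1) =>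
        (1 + (X : ℚ[X]) ^ 2) * (if i = j then 1 else 0) -
          X * (if ((i : ℕ) + 1 = (j : ℕ) ∧ (j : ℕ) ≤ n - 1) ∨
                  ((j : ℕ) + 1 = (i : ℕ) ∧ (i : ℕ) ≤ n - 1) ∨
                  ((i : ℕ) = n - 2 ∧ (j : ℕ) = n) ∨
                  ((j : ℕ) = n - 2 ∧ (i : ℕ) = n) then 1 else 0)).det *
      ((1 - (X : ℚ[X]) ^ 2) * (1 - (X : ℚ[X]) ^ (2 * n)))
    = (1 - (X : ℚ[X]) ^ 4) * (1 - (X : ℚ[X]) ^ (4 * n)) := by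
  obtain ⟨m, rfl⟩ : ∃ m, n = m + 3 := ⟨n - 3, by omega⟩
  have hM : (Matrix.of fun i j : Fin (m + 3 + 1) =>
        (1 + (X : ℚ[X]) ^ 2) * (if i = j then 1 else 0) -
          X * (if ((i : ℕ) + 1 = (j : ℕ) ∧ (j : ℕ) ≤ m + 3 - 1) ∨
                  ((j : ℕ) + 1 = (i : ℕ) ∧ (i : ℕ) ≤ m + 3 - 1) ∨
                  ((i : ℕ) = m + 3 - 2 ∧ (j : ℕ) = m + 3) ∨
                  ((j : ℕ) = m + 3 - 2 ∧ (i : ℕ) = m + 3) then 1 else 0)) = dM m := by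
    refine Matrix.ext fun i j => ?_
    have hi := i.isLt; have hj := j.isLt
    simp only [Matrix.of_apply, dM, Fin.ext_iff]
    split_ifs <;> first | omega | ring
  rw [hM, dM_det]
  rw [show 4 * (m + 3) = 2 * (m + 3) + 2 * (m + 3) from by ring, pow_add]
  ring
end

section
/- Let A be a finite-dimensional ℂ-algebra with nondegenerate symmetric associative trace form and dual bases {x_i}, {x_i*}. Define d₄*: A → A by d₄*(x) = Σ_i x_i x x_i*. Then the kernel of d₄* contains no nonzero element of the span of central idempotents e_j whenever the matrix (dim e_k A e_j)_{k,j} is invertible; i.e., if Σ_j λ_j Σ_i Tr(e_k x_i e_j x_i*) = Σ_j λ_j dim(e_k A e_j) = 0 for all k implies all λ_j = 0. -/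
/-- For a finite-dimensional algebra with nondegenerate symmetric associative trace form,
dual bases `{xᵢ}, {xᵢ*}`, and orthogonal idempotents `e₁, …, e_r` summing to `1`:
`Σᵢ Tr(e_k xᵢ e_j xᵢ*) = dim_ℂ(e_k A e_j)`; consequently, if the matrix
`(dim e_k A e_j)_{k,j}` is invertible, then `Σⱼ λⱼ Σᵢ Tr(e_k xᵢ e_j xᵢ*) = 0` for all `k`
forces all `λⱼ = 0`, i.e. `d₄*(x) = Σᵢ xᵢ x xᵢ*` kills no nonzero element of the span of the
`e_j`. -/
theorem stmt16 {A : Type*} [Ring A] [Algebra ℂ A] [FiniteDimensional ℂ A]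
    {ι : Type*} [Fintype ι] [DecidableEq ι]
    (B : A →ₗ[ℂ] A →ₗ[ℂ] ℂ)
    (hsymm : ∀ x y : A, B x y = B y x)
    (hassoc : ∀ x y z : A, B (x * y) z = B x (y * z))
    (hnd : ∀ x : A, (∀ y : A, B x y = 0) → x = 0)
    (x : Module.Basis ι ℂ A) (y : ι → A)
    (hdual : ∀ i j, B (x i) (y j) = if i = j then 1 else 0)
    {r : ℕ} (e : Fin r → A)
    (horth : ∀ k j, e k * e j = if k = j then e k else 0)
    (hsum : ∑ k, e k = 1) :
    (∀ k j, ∑ i, B (e k * x i * e j) (y i)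
        = (Module.finrank ℂ (LinearMap.range
            ((LinearMap.mulLeft ℂ (e k)).comp (LinearMap.mulRight ℂ (e j)))) : ℂ)) ∧
    ((Matrix.of fun k j : Fin r =>
        ((Module.finrank ℂ (LinearMap.range
          ((LinearMap.mulLeft ℂ (e k)).comp (LinearMap.mulRight ℂ (e j))))) : ℂ)).det ≠ 0 →
      ∀ lam : Fin r → ℂ,
        (∀ k, ∑ j, lam j * ∑ i, B (e k * x i * e j) (y i) = 0) → lam = 0) := by
  -- coordinate functionals via the dual basis
  have hrepr : ∀ (a : A) (i : ι), B a (y i) = x.repr a i := by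
    intro a i
    conv_lhs => rw [← x.sum_repr a]
    simp only [map_sum, LinearMap.coe_sum, Finset.sum_apply, map_smul, LinearMap.smul_apply,
      hdual, smul_eq_mul, mul_ite, mul_one, mul_zero]
    simp
  have key : ∀ k j, ∑ i, B (e k * x i * e j) (y i)
      = (Module.finrank ℂ (LinearMap.range
          ((LinearMap.mulLeft ℂ (e k)).comp (LinearMap.mulRight ℂ (e j)))) : ℂ) := by
    intro k j
    set P : A →ₗ[ℂ] A := (LinearMap.mulLeft ℂ (e k)).comp (LinearMap.mulRight ℂ (e j)) with hP
    have hPapp : ∀ a, P a = e k * a * e j := by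
      intro a
      simp [hP, LinearMap.mulLeft_apply, LinearMap.mulRight_apply, mul_assoc]
    have hidem : P ∘ₗ P = P := by
      ext a
      have hk : e k * e k = e k := by simpa using horth k k
      have hj : e j * e j = e j := by simpa using horth j j
      simp only [LinearMap.comp_apply, hPapp]
      rw [show e k * (e k * a * e j) * e j = (e k * e k) * a * (e j * e j) by simp [mul_assoc], hk, hj]
    have hproj : LinearMap.IsProj (LinearMap.range P) P := by
      constructor
      · intro a; exact LinearMap.mem_range_self P a
      · rintro a ⟨b, rfl⟩
        have := congrArg (fun f => f b) hidem
        simpa using this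
    have htr : LinearMap.trace ℂ A P = (Module.finrank ℂ (LinearMap.range P) : ℂ) :=
      hproj.trace
    have hsumtr : ∑ i, B (e k * x i * e j) (y i) = LinearMap.trace ℂ A P := by
      rw [LinearMap.trace_eq_matrix_trace ℂ x, Matrix.trace]
      simp only [Matrix.diag, LinearMap.toMatrix_apply]
      exact Finset.sum_congr rfl fun i _ => by rw [hrepr, hPapp]
    rw [hsumtr, htr]
  refine ⟨key, ?_⟩
  intro hdet lam hlam
  set M : Matrix (Fin r) (Fin r) ℂ := Matrix.of fun k j : Fin r =>
      ((Module.finrank ℂ (LinearMap.range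
        ((LinearMap.mulLeft ℂ (e k)).comp (LinearMap.mulRight ℂ (e j))))) : ℂ) with hM
  have hmv : M.mulVec lam = 0 := by
    funext k
    have := hlam k
    simp only [key] at this
    simpa [Matrix.mulVec, dotProduct, hM, mul_comm] using this
  haveI : Invertible M := M.invertibleOfIsUnitDet (isUnit_iff_ne_zero.mpr hdet)
  have := M.mulVec_injective_of_invertible
  have h0 : M.mulVec lam = M.mulVec 0 := by simpa using hmv
  exact this h0
end
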